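/- For every odd integer b ≥ 1, the expected maximum of a uniformly random ±1-step walk of length b starting at 0 satisfies E[X_b] = 2^{−b} · ((b+1)·C(b, ⌊b/2⌋) − 2^{b−1}); equivalently, ∑_{m=0}^{b} m·f(m,b) = (b+1)·C(b, ⌊b/2⌋) − 2^{b−1}. -/

import Mathlib

/-- The value of a ±1 step: `true` is a rightward step (+1), `false` a leftward step (−1). -/
def stepVal (x : Bool) : ℤ := if x then 1 else -1

/-- The position after `k` steps (partial sum `S_k`) of the walk with steps `ε`. -/
def partialSum {b : ℕ} (ε : Fin b → Bool) (k : ℕ) : ℤ :=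
  ∑ i : Fin b, if (i : ℕ) < k then stepVal (ε i) else 0

/-- The maximum attained position `max { S_k : 0 ≤ k ≤ b }` of the walk with steps `ε`,
started at 0. -/
def walkMax {b : ℕ} (ε : Fin b → Bool) : ℤ :=
  (Finset.range (b + 1)).sup' ⟨0, Finset.mem_range.mpr (Nat.succ_pos b)⟩ (partialSum ε)

/-- `f m b` : the number of ±1-step walks of length `b` starting at 0 whose maximum
attained position equals `m`. -/
def f (m : ℤ) (b : ℕ) : ℕ :=
  (Finset.univ.filter (fun ε : Fin b → Bool => walkMax ε = m)).card

/-!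
By the reflection principle (reflect the walk after its first visit to `m`),
`#{max ≥ m} = #{S_b ≥ m} + #{S_b > m}` for `m ≥ 0`. Summing over `m ≥ 1` turns `∑ max` into
`∑ (S_b⁺ + (S_b - 1)⁺)`, a function of the endpoint alone; `S_b = b - 2j` for the `C(b, j)` walks
with `j` down-steps.
For `b = 2n + 1` only `j ≤ n` contributes, and the telescoping identity
`∑_{j ≤ n} (b - 2j) C(b, j) = (n + 1) C(b, n + 1)` together with `∑_{j ≤ n} C(b, j) = 4ⁿ` finishes.
-/

open Finset

section

variable {b : ℕ}

lemma stepVal_le_one (x : Bool) : stepVal x ≤ 1 := by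
  cases x <;> simp [stepVal]

lemma stepVal_not (x : Bool) : stepVal (!x) = -stepVal x := by
  cases x <;> simp [stepVal]

lemma partialSum_zero (ε : Fin b → Bool) : partialSum ε 0 = 0 := by
  simp [partialSum]

lemma partialSum_of_le (ε : Fin b → Bool) {k : ℕ} (hk : b ≤ k) :
    partialSum ε k = partialSum ε b := by
  unfold partialSum
  refine sum_congr rfl fun i _ => ?_
  rw [if_pos (i.isLt.trans_le hk), if_pos i.isLt]

lemma partialSum_succ (ε : Fin b → Bool) {k : ℕ} (hk : k < b) :
    partialSum ε (k + 1) = partialSum ε k + stepVal (ε ⟨k, hk⟩) := by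
  unfold partialSum
  have hstep : stepVal (ε ⟨k, hk⟩) = ∑ i, if i = ⟨k, hk⟩ then stepVal (ε i) else 0 := by simp
  rw [hstep, ← sum_add_distrib]
  refine sum_congr rfl fun i _ => ?_
  by_cases hi : i = ⟨k, hk⟩
  · subst hi; simp
  · have : (i : ℕ) ≠ k := fun h => hi (Fin.ext h)
    rw [if_neg hi]
    split_ifs <;> omega

lemma partialSum_succ_le (ε : Fin b → Bool) (k : ℕ) :
    partialSum ε (k + 1) ≤ partialSum ε k + 1 := by
  by_cases hk : k < b
  · rw [partialSum_succ ε hk]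
    linarith [stepVal_le_one (ε ⟨k, hk⟩)]
  · rw [partialSum_of_le ε (by omega : b ≤ k + 1), partialSum_of_le ε (by omega : b ≤ k)]
    omega

lemma partialSum_le (ε : Fin b → Bool) (k : ℕ) : partialSum ε k ≤ b := by
  calc partialSum ε k ≤ ∑ _i : Fin b, (1 : ℤ) :=
        sum_le_sum fun i _ => by split_ifs <;> simp [stepVal_le_one]
    _ = b := by simp

lemma exists_partialSum_eq {ε : Fin b → Bool} {m : ℤ} (hm : 0 ≤ m) {K : ℕ}
    (hK : m ≤ partialSum ε K) : ∃ k ≤ K, partialSum ε k = m := by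
  induction K with
  | zero => exact ⟨0, le_rfl, by rw [partialSum_zero] at hK ⊢; omega⟩
  | succ K ih =>
    by_cases hmK : m ≤ partialSum ε K
    · obtain ⟨k, hk, hS⟩ := ih hmK
      exact ⟨k, by omega, hS⟩
    · exact ⟨K + 1, le_rfl, by linarith [partialSum_succ_le ε K]⟩

lemma partialSum_le_walkMax (ε : Fin b → Bool) {k : ℕ} (hk : k ≤ b) :
    partialSum ε k ≤ walkMax ε :=
  le_sup' (partialSum ε) (mem_range.2 (Nat.lt_succ_of_le hk))

lemma walkMax_nonneg (ε : Fin b → Bool) : 0 ≤ walkMax ε :=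
  partialSum_zero ε ▸ partialSum_le_walkMax ε (Nat.zero_le b)

lemma walkMax_le (ε : Fin b → Bool) : walkMax ε ≤ b :=
  sup'_le _ _ fun k _ => partialSum_le ε k

lemma le_walkMax_iff {ε : Fin b → Bool} {m : ℤ} :
    m ≤ walkMax ε ↔ ∃ k ≤ b, m ≤ partialSum ε k := by
  unfold walkMax
  exact (le_sup'_iff _).trans (by simp only [mem_range, Nat.lt_succ_iff])

def reflectFrom (t : ℕ) (ε : Fin b → Bool) : Fin b → Bool :=
  fun i => if t ≤ i then !ε i else ε i

lemma reflectFrom_reflectFrom (t : ℕ) (ε : Fin b → Bool) :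
    reflectFrom t (reflectFrom t ε) = ε := by
  funext i
  unfold reflectFrom
  split_ifs <;> simp

lemma partialSum_reflectFrom (t : ℕ) (ε : Fin b → Bool) (k : ℕ) :
    partialSum (reflectFrom t ε) k =
      if k ≤ t then partialSum ε k else 2 * partialSum ε t - partialSum ε k := by
  unfold partialSum
  split_ifs with hkt
  · refine sum_congr rfl fun i _ => ?_
    unfold reflectFrom
    split_ifs <;> first | rfl | omega
  · rw [mul_sum, ← sum_sub_distrib]
    refine sum_congr rfl fun i _ => ?_
    unfold reflectFrom
    split_ifs <;> first | omega | simp [stepVal_not]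

def hitTime (m : ℤ) (ε : Fin b → Bool) : ℕ :=
  Nat.find (⟨b, Or.inr le_rfl⟩ : ∃ k, partialSum ε k = m ∨ b ≤ k)

lemma hitTime_le (m : ℤ) (ε : Fin b → Bool) : hitTime m ε ≤ b :=
  Nat.find_min' _ (Or.inr le_rfl)

lemma hitTime_spec (m : ℤ) (ε : Fin b → Bool) :
    partialSum ε (hitTime m ε) = m ∨ b ≤ hitTime m ε := by
  exact Nat.find_spec (⟨b, Or.inr le_rfl⟩ : ∃ k, partialSum ε k = m ∨ b ≤ k)

lemma partialSum_hitTime {m : ℤ} {ε : Fin b → Bool} (hm : 0 ≤ m) (h : m ≤ walkMax ε) :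
    partialSum ε (hitTime m ε) = m := by
  obtain ⟨K, hKb, hmK⟩ := le_walkMax_iff.1 h
  obtain ⟨k, hkK, hk⟩ := exists_partialSum_eq hm hmK
  have hτk : hitTime m ε ≤ k := Nat.find_min' _ (Or.inl hk)
  rcases hitTime_spec m ε with hτ | hτ
  · exact hτ
  · rwa [show hitTime m ε = k by omega]

lemma hitTime_congr {m : ℤ} {ε ε' : Fin b → Bool}
    (h : ∀ k ≤ hitTime m ε, partialSum ε' k = partialSum ε k) :
    hitTime m ε' = hitTime m ε := by
  have hτ := hitTime_spec m ε
  rw [hitTime, Nat.find_eq_iff, h _ le_rfl]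
  exact ⟨hτ, fun n hn => h n hn.le ▸ Nat.find_min _ hn⟩

def reflectAtHit (m : ℤ) (ε : Fin b → Bool) : Fin b → Bool :=
  reflectFrom (hitTime m ε) ε

lemma hitTime_reflectAtHit (m : ℤ) (ε : Fin b → Bool) :
    hitTime m (reflectAtHit m ε) = hitTime m ε :=
  hitTime_congr fun k hk => by rw [reflectAtHit, partialSum_reflectFrom, if_pos hk]

lemma reflectAtHit_reflectAtHit (m : ℤ) (ε : Fin b → Bool) :
    reflectAtHit m (reflectAtHit m ε) = ε := by
  rw [reflectAtHit, hitTime_reflectAtHit, reflectAtHit, reflectFrom_reflectFrom]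

lemma partialSum_reflectAtHit_hitTime (m : ℤ) (ε : Fin b → Bool) :
    partialSum (reflectAtHit m ε) (hitTime m ε) = partialSum ε (hitTime m ε) := by
  rw [reflectAtHit, partialSum_reflectFrom, if_pos le_rfl]

lemma partialSum_reflectAtHit_end {m : ℤ} {ε : Fin b → Bool} (hm : 0 ≤ m)
    (h : m ≤ walkMax ε) : partialSum (reflectAtHit m ε) b = 2 * m - partialSum ε b := by
  have hτ := partialSum_hitTime hm h
  rw [reflectAtHit, partialSum_reflectFrom]
  split_ifs with hb
  · rw [show hitTime m ε = b from le_antisymm (hitTime_le m ε) hb] at hτ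
    omega
  · rw [hτ]

theorem card_le_walkMax {m : ℤ} (hm : 0 ≤ m) :
    #{ε : Fin b → Bool | m ≤ walkMax ε}
      = #{ε : Fin b → Bool | m ≤ partialSum ε b} + #{ε : Fin b → Bool | m < partialSum ε b} := by
  rw [← card_filter_add_card_filter_not (p := fun ε => m ≤ partialSum ε b), filter_filter,
    filter_filter]
  congr 1
  · refine congrArg card (filter_congr fun ε _ => ⟨And.right, fun h => ⟨?_, h⟩⟩)
    exact h.trans (partialSum_le_walkMax ε le_rfl)
  · refine card_nbij' (reflectAtHit m) (reflectAtHit m) ?_ ?_ ?_ ?_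
    · intro ε hε
      simp only [coe_filter, Set.mem_ofPred_eq, mem_univ, true_and] at hε ⊢
      rw [partialSum_reflectAtHit_end hm hε.1]
      omega
    · intro ε hε
      simp only [coe_filter, Set.mem_ofPred_eq, mem_univ, true_and] at hε ⊢
      have hmax : m ≤ walkMax ε := hε.le.trans (partialSum_le_walkMax ε le_rfl)
      refine ⟨?_, by rw [partialSum_reflectAtHit_end hm hmax]; omega⟩
      calc m = partialSum (reflectAtHit m ε) (hitTime m ε) := by
            rw [partialSum_reflectAtHit_hitTime, partialSum_hitTime hm hmax]
        _ ≤ walkMax (reflectAtHit m ε) := partialSum_le_walkMax _ (hitTime_le m ε)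
    · exact fun ε _ => reflectAtHit_reflectAtHit m ε
    · exact fun ε _ => reflectAtHit_reflectAtHit m ε

lemma sum_Icc_ite_le {x N : ℤ} (hx : x ≤ N) :
    ∑ m ∈ Icc 1 N, (if m ≤ x then 1 else 0 : ℤ) = max x 0 := by
  rw [sum_boole, ← Int.toNat_eq_max]
  have hfilter : {m ∈ Icc 1 N | m ≤ x} = Icc 1 x := by
    ext m
    simp only [mem_filter, mem_Icc]
    omega
  rw [hfilter, Int.card_Icc, add_sub_cancel_right]

theorem sum_walkMax_eq_sum_partialSum (b : ℕ) :
    ∑ ε : Fin b → Bool, walkMax ε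
      = ∑ ε : Fin b → Bool, (max (partialSum ε b) 0 + max (partialSum ε b - 1) 0) := by
  calc ∑ ε : Fin b → Bool, walkMax ε
      = ∑ ε : Fin b → Bool, ∑ m ∈ Icc (1 : ℤ) b, (if m ≤ walkMax ε then 1 else 0 : ℤ) :=
        sum_congr rfl fun ε _ => by
          rw [sum_Icc_ite_le (walkMax_le ε), max_eq_left (walkMax_nonneg ε)]
    _ = ∑ m ∈ Icc (1 : ℤ) b, (#{ε : Fin b → Bool | m ≤ walkMax ε} : ℤ) := by
        rw [sum_comm]
        simp only [sum_boole]
    _ = ∑ m ∈ Icc (1 : ℤ) b, ((#{ε : Fin b → Bool | m ≤ partialSum ε b} : ℤ)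
          + #{ε : Fin b → Bool | m ≤ partialSum ε b - 1}) :=
        sum_congr rfl fun m hm => by
          rw [card_le_walkMax (by linarith [(mem_Icc.1 hm).1])]
          simp only [le_sub_iff_add_le, Int.lt_iff_add_one_le, Nat.cast_add]
    _ = ∑ ε : Fin b → Bool, (max (partialSum ε b) 0 + max (partialSum ε b - 1) 0) := by
        simp only [← sum_boole, ← sum_add_distrib]
        rw [sum_comm]
        refine sum_congr rfl fun ε _ => ?_
        have hS := partialSum_le ε b
        rw [sum_add_distrib, sum_Icc_ite_le hS, sum_Icc_ite_le (by omega)]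

lemma partialSum_eq_sub_card (ε : Fin b → Bool) :
    partialSum ε b = b - 2 * #{i | ε i = false} := by
  have hstep : ∀ i : Fin b,
      (if (i : ℕ) < b then stepVal (ε i) else 0) = 1 - 2 * (if ε i = false then 1 else 0) := by
    intro i
    rw [if_pos i.isLt]
    cases ε i <;> simp [stepVal]
  rw [partialSum, sum_congr rfl fun i _ => hstep i, sum_sub_distrib, ← mul_sum, sum_boole]
  simp

lemma sum_comp_card_false {M : Type*} [AddCommMonoid M] (F : ℕ → M) :
    ∑ ε : Fin b → Bool, F #{i | ε i = false} = ∑ j ∈ range (b + 1), b.choose j • F j := by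
  have h := sum_powerset_apply_card F (x := (univ : Finset (Fin b)))
  rw [card_univ, Fintype.card_fin] at h
  rw [← h]
  refine sum_nbij' (fun ε => univ.filter fun i => ε i = false) (fun s i => decide (i ∉ s)) ?_ ?_ ?_ ?_ ?_
    <;> intro x _
  · simp
  · simp
  · funext i; simp
  · ext i; simp
  · rfl

lemma sum_comp_partialSum (G : ℤ → ℤ) :
    ∑ ε : Fin b → Bool, G (partialSum ε b)
      = ∑ j ∈ range (b + 1), (b.choose j : ℤ) * G (b - 2 * j) := by
  simp only [partialSum_eq_sub_card]
  rw [sum_comp_card_false (fun j => G (b - 2 * j))]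
  simp only [nsmul_eq_mul]

lemma sum_range_sub_two_mul_mul_choose (b n : ℕ) :
    ∑ k ∈ range n, ((b : ℤ) - 2 * k) * b.choose k = n * b.choose n := by
  have hpascal : ∀ k : ℕ, ((k : ℤ) + 1) * b.choose (k + 1) = (b - k) * b.choose k := by
    intro k
    rcases le_or_gt k b with hk | hk
    · have := congrArg (Nat.cast : ℕ → ℤ) (Nat.choose_succ_right_eq b k)
      push_cast [Nat.cast_sub hk] at this
      linarith
    · simp [Nat.choose_eq_zero_of_lt hk, Nat.choose_eq_zero_of_lt (Nat.lt_succ_of_lt hk)]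
  have h := sum_range_sub (fun k : ℕ => (k : ℤ) * b.choose k) n
  simp only [Nat.cast_add, Nat.cast_one, hpascal, Nat.cast_zero, zero_mul, sub_zero] at h
  rw [← h]
  exact sum_congr rfl fun k _ => by ring

theorem sum_walkMax_of_odd (n : ℕ) :
    ∑ ε : Fin (2 * n + 1) → Bool, walkMax ε
      = (2 * n + 2) * (2 * n + 1).choose n - 4 ^ n := by
  set b := 2 * n + 1 with hb
  set G : ℤ → ℤ := fun s => max s 0 + max (s - 1) 0
  have hlow : ∀ j ∈ range (n + 1),
      (b.choose j : ℤ) * G (b - 2 * j) = 2 * (((b : ℤ) - 2 * j) * b.choose j) - b.choose j := by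
    intro j hj
    have : j ≤ n := Nat.lt_succ_iff.1 (mem_range.1 hj)
    simp only [G, hb]
    rw [max_eq_left (by push_cast; omega), max_eq_left (by push_cast; omega)]
    ring
  have hhigh : ∀ j ∈ range (n + 1), (b.choose (n + 1 + j) : ℤ) * G (b - 2 * ↑(n + 1 + j)) = 0 := by
    intro j _
    simp only [G, hb]
    rw [max_eq_right (by push_cast; omega), max_eq_right (by push_cast; omega)]
    ring
  rw [sum_walkMax_eq_sum_partialSum, sum_comp_partialSum G,
    show b + 1 = (n + 1) + (n + 1) by omega, sum_range_add, sum_congr rfl hlow,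
    sum_eq_zero hhigh, sum_sub_distrib, ← mul_sum, sum_range_sub_two_mul_mul_choose,
    ← Nat.cast_sum, hb, Nat.sum_range_choose_halfway, Nat.choose_symm_half]
  push_cast
  ring

lemma sum_mul_f_eq_sum_walkMax (b : ℕ) :
    ∑ m ∈ range (b + 1), (m : ℤ) * f m b = ∑ ε : Fin b → Bool, walkMax ε := by
  rw [← sum_fiberwise_of_maps_to (g := fun ε : Fin b → Bool => (walkMax ε).toNat)
    (t := range (b + 1)) (fun ε _ => mem_range.2 (by have := walkMax_le ε; omega))]
  refine sum_congr rfl fun m _ => ?_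
  have hfiber : (univ.filter fun ε : Fin b → Bool => (walkMax ε).toNat = m)
      = univ.filter fun ε => walkMax ε = m :=
    filter_congr fun ε _ => by have := walkMax_nonneg ε; omega
  rw [hfiber, sum_congr rfl fun ε hε => (mem_filter.1 hε).2, sum_const, nsmul_eq_mul, f, mul_comm]

end

theorem expected_max_odd_general (b : ℕ) (hbo : Odd b) :
    (∑ m ∈ Finset.range (b + 1), (m : ℚ) * (f m b : ℚ)) / 2 ^ b
      = (((b : ℚ) + 1) * (Nat.choose b (b / 2) : ℚ) - 2 ^ (b - 1)) / 2 ^ b ∧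
    ∑ m ∈ Finset.range (b + 1), (m : ℤ) * (f m b : ℤ)
      = ((b : ℤ) + 1) * (Nat.choose b (b / 2) : ℤ) - 2 ^ (b - 1) := by
  obtain ⟨n, rfl⟩ := hbo
  have hsum : ∑ m ∈ Finset.range (2 * n + 1 + 1), (m : ℤ) * f m (2 * n + 1)
      = ((2 * n + 1 : ℕ) + 1) * (2 * n + 1).choose ((2 * n + 1) / 2) - 2 ^ (2 * n + 1 - 1) := by
    rw [sum_mul_f_eq_sum_walkMax, sum_walkMax_of_odd, show (2 * n + 1) / 2 = n by omega,
      Nat.add_sub_cancel, pow_mul]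
    push_cast
    ring
  refine ⟨?_, hsum⟩
  rw [div_left_inj' (by positivity)]
  exact_mod_cast hsum

/-- Proposition 3 (odd case): for odd `b ≥ 1`, the expected maximum of a uniformly
random ±1-step walk of length `b` is `2^{−b}·((b+1)·C(b, ⌊b/2⌋) − 2^{b−1})`;
equivalently, `∑_{m=0}^{b} m·f(m,b) = (b+1)·C(b, ⌊b/2⌋) − 2^{b−1}`. -/
theorem expected_max_odd (b : ℕ) (hb : 1 ≤ b) (hbo : Odd b) :
    (∑ m ∈ Finset.range (b + 1), (m : ℚ) * (f m b : ℚ)) / 2 ^ b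
      = (((b : ℚ) + 1) * (Nat.choose b (b / 2) : ℚ) - 2 ^ (b - 1)) / 2 ^ b ∧
    ∑ m ∈ Finset.range (b + 1), (m : ℤ) * (f m b : ℤ)
      = ((b : ℤ) + 1) * (Nat.choose b (b / 2) : ℤ) - 2 ^ (b - 1) :=
  expected_max_odd_general b hbo
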